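/- Let C be a Krull-Schmidt category with local descending chain condition on ideals, I an idempotent ideal of C, L a representative set of the identity morphisms contained in I, and R = I ∩ rad_C*. Then I is generated as an ideal of C by L ∪ R. -/

import Mathlib

/-!
By induction on `α`, every morphism of `I` is a sum `u + v` with `u` in the ideal generated by
the identities of `S` and `v ∈ I ∩ rad^α`. At a successor stage, idempotency writes a morphism of
`I` as a sum of composites `a ≫ b` with `a, b ∈ I`, which we split through the indecomposable
summands `W` of the middle object: if `𝟙 W ∈ I` then `W` is isomorphic to an object of `S`,
and otherwise the second factor is radical (for `α ≥ ω` the induction hypothesis at the limit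
part of `α` supplies it instead). At limit stages, and finally for `rad*` itself,
the local d.c.c. makes the chain `I ∩ rad^β` stabilise at each pair of objects, so a single
index `β` serves for all larger ones.
-/

open CategoryTheory CategoryTheory.Limits

universe w v u

structure CatIdeal (C : Type u) [Category.{v} C] [Preadditive C] where
  mem : ∀ {X Y : C}, (X ⟶ Y) → Prop
  zero_mem : ∀ {X Y : C}, mem (0 : X ⟶ Y)
  add_mem : ∀ {X Y : C} {f g : X ⟶ Y}, mem f → mem g → mem (f + g)
  comp_mem_left : ∀ {X Y Z : C} {f : X ⟶ Y} (g : Y ⟶ Z), mem f → mem (f ≫ g)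
  comp_mem_right : ∀ {X Y Z : C} (f : X ⟶ Y) {g : Y ⟶ Z}, mem g → mem (f ≫ g)

namespace CatIdeal

variable {C : Type u} [Category.{v} C] [Preadditive C]

instance : LE (CatIdeal C) :=
  ⟨fun I J => ∀ {X Y : C} {f : X ⟶ Y}, I.mem f → J.mem f⟩

/-- The ideal of all morphisms. -/
def top (C : Type u) [Category.{v} C] [Preadditive C] : CatIdeal C where
  mem _ := True
  zero_mem := trivial
  add_mem := by intros; trivial
  comp_mem_left := by intros; trivial
  comp_mem_right := by intros; trivial

/-- The ideal generated by a class of morphisms. -/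
def span (S : ∀ {X Y : C}, (X ⟶ Y) → Prop) : CatIdeal C where
  mem f := ∀ J : CatIdeal C, (∀ {A B : C} {g : A ⟶ B}, S g → J.mem g) → J.mem f
  zero_mem := fun J _ => J.zero_mem
  add_mem := by intro X Y f g hf hg J hS; exact J.add_mem (hf J hS) (hg J hS)
  comp_mem_left := by intro X Y Z f g hf J hS; exact J.comp_mem_left g (hf J hS)
  comp_mem_right := by intro X Y Z f g hg J hS; exact J.comp_mem_right f (hg J hS)

/-- The product of two ideals: the ideal generated by all composites `g ≫ h`
with `g ∈ I` and `h ∈ J`. -/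
def mul (I J : CatIdeal C) : CatIdeal C :=
  span (fun {X Z} f => ∃ (Y : C) (g : X ⟶ Y) (h : Y ⟶ Z), I.mem g ∧ J.mem h ∧ f = g ≫ h)

/-- An ideal is idempotent if it equals its square. -/
def IsIdempotent (I : CatIdeal C) : Prop := I = I.mul I

/-- The intersection of a family of ideals. -/
def iInter {ι : Sort*} (F : ι → CatIdeal C) : CatIdeal C where
  mem f := ∀ i, (F i).mem f
  zero_mem := fun i => (F i).zero_mem
  add_mem := by intro X Y f g hf hg i; exact (F i).add_mem (hf i) (hg i)
  comp_mem_left := by intro X Y Z f g hf i; exact (F i).comp_mem_left g (hf i)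
  comp_mem_right := by intro X Y Z f g hg i; exact (F i).comp_mem_right f (hg i)

/-- Finite powers of an ideal: `npow I n` is the ideal generated by `n`-fold
composites of morphisms from `I` (with `npow I 0` the ideal of all morphisms). -/
def npow (I : CatIdeal C) : ℕ → CatIdeal C
  | 0 => top C
  | n + 1 => (npow I n).mul I

/-- The largest limit-or-zero ordinal `≤ α`, namely `ω * (α / ω)`. -/
noncomputable def limitPart (α : Ordinal.{w}) : Ordinal.{w} :=
  Ordinal.omega0 * (α / Ordinal.omega0)

theorem limitPart_lt {α : Ordinal.{w}} (h0 : α ≠ 0) (hl : ¬ Order.IsSuccLimit α) :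
    limitPart α < α := by
  have hle : limitPart α ≤ α := Ordinal.mul_div_le α Ordinal.omega0
  rcases lt_or_eq_of_le hle with h | h
  · exact h
  · exfalso
    rcases eq_or_ne (α / Ordinal.omega0) 0 with hq | hq
    · exact h0 (by rw [← h]; simp [limitPart, hq])
    · exact hl (by rw [← h]; exact Ordinal.isSuccLimit_mul_left Ordinal.isSuccLimit_omega0 (pos_iff_ne_zero.2 hq))

end CatIdeal

open Ordinal Classical in
/-- Transfinite powers of an ideal `I`: `tpow I 0` is the ideal of all morphisms,
`tpow I n` (for finite `n ≥ 1`) is the ideal generated by `n`-fold composites of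
morphisms from `I`, `tpow I α = ⋂_{β < α} tpow I β` at limit ordinals `α`, and
`tpow I (β + n) = (tpow I β) ^ (n + 1)` for `β` limit and `1 ≤ n < ω`. -/
noncomputable def CatIdeal.tpow {C : Type u} [Category.{v} C] [Preadditive C]
    (I : CatIdeal C) : Ordinal.{w} → CatIdeal C
  | α =>
    if h0 : α = 0 then CatIdeal.top C
    else if hl : Order.IsSuccLimit α then
      CatIdeal.iInter (fun β : {β : Ordinal.{w} // β < α} =>
        have := β.2
        CatIdeal.tpow I β.1)
    else
      (have : Ordinal.pred α < α :=
        by obtain ⟨a, rfl⟩ := (Ordinal.zero_or_succ_or_isSuccLimit α).resolve_left h0 |>.resolve_right hl; exact (Ordinal.pred_succ a).symm ▸ Order.lt_succ a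
       CatIdeal.tpow I (Ordinal.pred α)).mul
        (if Ordinal.omega0 ≤ α then
          have := CatIdeal.limitPart_lt h0 hl
          CatIdeal.tpow I (CatIdeal.limitPart α)
         else I)
  termination_by α => α

namespace CatIdeal

/-- The intersection `I* = ⋂_α I^α` of all transfinite powers of `I`. -/
noncomputable def tstar {C : Type u} [Category.{v} C] [Preadditive C] (I : CatIdeal C) : CatIdeal C :=
  iInter (fun α : Ordinal.{v} => tpow I α)

end CatIdeal

section KS

open CategoryTheory CategoryTheory.Limits

variable (C : Type u) [Category.{v} C] [Preadditive C]

/-- `X` is a biproduct (finite direct sum) of the finite family `Y`,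
witnessed by projections and inclusions. -/
def IsBiproductOf (X : C) {n : ℕ} (Y : Fin n → C) : Prop :=
  ∃ (p : ∀ i, X ⟶ Y i) (s : ∀ i, Y i ⟶ X),
    (∀ i, s i ≫ p i = 𝟙 (Y i)) ∧ (∀ i j, i ≠ j → s i ≫ p j = 0) ∧
    (∑ i, p i ≫ s i) = 𝟙 X

/-- An object is indecomposable if it is nonzero and has no idempotent endomorphisms
other than `0` and the identity (i.e. it admits no nontrivial direct sum decomposition). -/
def IsIndecomposableObj (X : C) : Prop :=
  ¬ IsZero X ∧ ∀ e : X ⟶ X, e ≫ e = e → e = 0 ∨ e = 𝟙 X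

/-- The radical of a Krull-Schmidt category: the ideal generated by all non-invertible
morphisms between indecomposable objects. -/
def catRadical : CatIdeal C :=
  CatIdeal.span (fun {X Y} f => IsIndecomposableObj C X ∧ IsIndecomposableObj C Y ∧ ¬ IsIso f)

/-- The transfinite radical `rad_C* = ⋂_α rad_C^α`. -/
noncomputable def catTransRadical : CatIdeal C := CatIdeal.tstar (catRadical C)

/-- A Krull-Schmidt category: every object decomposes as a finite direct sum of objects
with local endomorphism rings. -/
def IsKrullSchmidt : Prop :=
  ∀ X : C, ∃ (n : ℕ) (Y : Fin n → C),
    (∀ i, IsLocalRing (End (Y i))) ∧ IsBiproductOf C X Y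

/-- Local descending chain condition on ideals: every descending chain of ideals,
evaluated at any fixed pair of objects, stabilizes. -/
def HasLocalDCC : Prop :=
  ∀ (I : ℕ → CatIdeal C), (∀ n, I (n + 1) ≤ I n) →
    ∀ X Y : C, ∃ n, ∀ m, n ≤ m → ∀ f : X ⟶ Y, (I m).mem f ↔ (I n).mem f

/-- The ideal generated by the identity morphisms of the objects in `S`. -/
def identityIdeal (S : Set C) : CatIdeal C :=
  CatIdeal.span (fun {X Y} f => ∃ h : X = Y, X ∈ S ∧ f = CategoryTheory.eqToHom h)

/-- An ideal is zero if it consists exactly of the zero morphisms. -/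
def CatIdeal.IsZeroIdeal {C : Type u} [Category.{v} C] [Preadditive C] (I : CatIdeal C) : Prop :=
  ∀ {X Y : C} {f : X ⟶ Y}, I.mem f → f = 0

end KS

namespace Ordinal

theorem pred_lt_of_not_isSuccLimit {α : Ordinal} (h0 : α ≠ 0) (hl : ¬ Order.IsSuccLimit α) :
    pred α < α :=
  pred_lt_iff_not_isSuccPrelimit.2 fun h => hl (isSuccLimit_iff.2 ⟨h0, h⟩)

end Ordinal

namespace CatIdeal

variable {C : Type u} [Category.{v} C] [Preadditive C]

theorem ext {I J : CatIdeal C} (h : ∀ {X Y : C} (f : X ⟶ Y), I.mem f ↔ J.mem f) : I = J := by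
  obtain ⟨m, _, _, _, _⟩ := I
  obtain ⟨m', _, _, _, _⟩ := J
  obtain rfl : @m = @m' := by
    funext X Y f
    exact propext (h f)
  rfl

protected def sup (I J : CatIdeal C) : CatIdeal C where
  mem f := ∃ u v, I.mem u ∧ J.mem v ∧ f = u + v
  zero_mem := ⟨0, 0, I.zero_mem, J.zero_mem, (add_zero 0).symm⟩
  add_mem := by
    rintro X Y _ _ ⟨u, v, hu, hv, rfl⟩ ⟨u', v', hu', hv', rfl⟩
    exact ⟨u + u', v + v', I.add_mem hu hu', J.add_mem hv hv', by abel⟩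
  comp_mem_left := by
    rintro X Y Z _ g ⟨u, v, hu, hv, rfl⟩
    exact ⟨u ≫ g, v ≫ g, I.comp_mem_left g hu, J.comp_mem_left g hv, Preadditive.add_comp ..⟩
  comp_mem_right := by
    rintro X Y Z f _ ⟨u, v, hu, hv, rfl⟩
    exact ⟨f ≫ u, f ≫ v, I.comp_mem_right f hu, J.comp_mem_right f hv, Preadditive.comp_add ..⟩

protected def inf (I J : CatIdeal C) : CatIdeal C where
  mem f := I.mem f ∧ J.mem f
  zero_mem := ⟨I.zero_mem, J.zero_mem⟩
  add_mem hf hg := ⟨I.add_mem hf.1 hg.1, J.add_mem hf.2 hg.2⟩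
  comp_mem_left g hf := ⟨I.comp_mem_left g hf.1, J.comp_mem_left g hf.2⟩
  comp_mem_right f := fun hg => ⟨I.comp_mem_right f hg.1, J.comp_mem_right f hg.2⟩

instance : Lattice (CatIdeal C) where
  le I J := I ≤ J
  le_refl _ _ _ _ := id
  le_trans _ _ _ h₁ h₂ _ _ _ hf := h₂ (h₁ hf)
  le_antisymm _ _ h₁ h₂ := ext fun _ => ⟨h₁, h₂⟩
  sup := CatIdeal.sup
  inf := CatIdeal.inf
  le_sup_left I J _ _ f hf := ⟨f, 0, hf, J.zero_mem, (add_zero f).symm⟩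
  le_sup_right I J _ _ f hf := ⟨0, f, I.zero_mem, hf, (zero_add f).symm⟩
  sup_le _ _ K h₁ h₂ := by
    rintro X Y _ ⟨u, v, hu, hv, rfl⟩
    exact K.add_mem (h₁ hu) (h₂ hv)
  inf_le_left _ _ _ _ _ hf := hf.1
  inf_le_right _ _ _ _ _ hf := hf.2
  le_inf _ _ _ h₁ h₂ _ _ _ hf := ⟨h₁ hf, h₂ hf⟩

theorem mem_sup {I J : CatIdeal C} {X Y : C} {f : X ⟶ Y} :
    (I ⊔ J).mem f ↔ ∃ u v, I.mem u ∧ J.mem v ∧ f = u + v :=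
  Iff.rfl

theorem mem_sup_left {I J : CatIdeal C} {X Y : C} {f : X ⟶ Y} (h : I.mem f) : (I ⊔ J).mem f :=
  mem_sup.2 ⟨f, 0, h, J.zero_mem, (add_zero f).symm⟩

theorem mem_sup_right {I J : CatIdeal C} {X Y : C} {f : X ⟶ Y} (h : J.mem f) : (I ⊔ J).mem f :=
  mem_sup.2 ⟨0, f, I.zero_mem, h, (zero_add f).symm⟩

theorem sum_mem (I : CatIdeal C) {ι : Type*} (t : Finset ι) {X Y : C} (f : ι → (X ⟶ Y))
    (h : ∀ i ∈ t, I.mem (f i)) : I.mem (∑ i ∈ t, f i) :=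
  Finset.sum_induction f _ (fun _ _ => I.add_mem) I.zero_mem h

theorem mem_span_of {P : ∀ {X Y : C}, (X ⟶ Y) → Prop} {X Y : C} {f : X ⟶ Y} (h : P f) :
    (span P).mem f :=
  fun _ hJ => hJ h

theorem span_le {P : ∀ {X Y : C}, (X ⟶ Y) → Prop} {J : CatIdeal C}
    (h : ∀ {X Y : C} {f : X ⟶ Y}, P f → J.mem f) : span P ≤ J :=
  fun hf => hf J h

theorem comp_mem_mul {I J : CatIdeal C} {X Y Z : C} {f : X ⟶ Y} {g : Y ⟶ Z}
    (hf : I.mem f) (hg : J.mem g) : (I.mul J).mem (f ≫ g) :=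
  mem_span_of ⟨Y, f, g, hf, hg, rfl⟩

theorem mul_le_left (I J : CatIdeal C) : I.mul J ≤ I :=
  span_le fun ⟨_, _, g, hf, _, hfg⟩ => hfg ▸ I.comp_mem_left g hf

theorem comp_mem_sup_inf_mul {I L T Q : CatIdeal C} {X Y Z : C} {a : X ⟶ Y} {b : Y ⟶ Z}
    (ha : (L ⊔ (I ⊓ T)).mem a) (hb : (L ⊔ (I ⊓ Q)).mem b) :
    (L ⊔ (I ⊓ T.mul Q)).mem (a ≫ b) := by
  obtain ⟨u, v, hu, ⟨hvI, hvT⟩, rfl⟩ := mem_sup.1 ha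
  obtain ⟨u', v', hu', ⟨-, hv'Q⟩, rfl⟩ := mem_sup.1 hb
  refine mem_sup.2 ⟨u ≫ (u' + v') + v ≫ u', v ≫ v',
    L.add_mem (L.comp_mem_left _ hu) (L.comp_mem_right _ hu'),
    ⟨I.comp_mem_left _ hvI, comp_mem_mul hvT hv'Q⟩, ?_⟩
  simp only [Preadditive.add_comp, Preadditive.comp_add]
  abel

theorem tpow_zero (I : CatIdeal C) : tpow I (0 : Ordinal.{w}) = top C := by
  rw [tpow]
  simp

theorem tpow_of_isSuccLimit (I : CatIdeal C) {α : Ordinal.{w}} (hl : Order.IsSuccLimit α) :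
    tpow I α = iInter (fun β : {β : Ordinal.{w} // β < α} => tpow I β.1) := by
  rw [tpow, dif_neg (Ordinal.isSuccLimit_iff.1 hl).1, dif_pos hl]

theorem tpow_of_not_isSuccLimit (I : CatIdeal C) {α : Ordinal.{w}} (h0 : α ≠ 0)
    (hl : ¬ Order.IsSuccLimit α) :
    tpow I α = (tpow I (Ordinal.pred α)).mul
      (if Ordinal.omega0 ≤ α then tpow I (limitPart α) else I) := by
  rw [tpow, dif_neg h0, dif_neg hl]

theorem tpow_antitone (I : CatIdeal C) : Antitone (tpow I : Ordinal.{w} → CatIdeal C) := by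
  intro β α hβα
  induction α using WellFoundedLT.induction generalizing β with
  | _ α IH =>
  intro X Y f hf
  obtain rfl | hβ := hβα.eq_or_lt
  · exact hf
  have h0 : α ≠ 0 := hβ.ne_bot
  by_cases hl : Order.IsSuccLimit α
  · rw [tpow_of_isSuccLimit I hl] at hf
    exact hf ⟨β, hβ⟩
  · rw [tpow_of_not_isSuccLimit I h0 hl] at hf
    exact IH _ (Ordinal.pred_lt_of_not_isSuccLimit h0 hl)
      (Order.lt_succ_iff.1 (hβ.trans_le (Ordinal.self_le_succ_pred α))) (mul_le_left _ _ hf)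

end CatIdeal

section KrullSchmidt

variable {C : Type u} [Category.{v} C] [Preadditive C]

open CatIdeal

theorem isIndecomposableObj_of_isLocalRing {W : C} (hW : IsLocalRing (End W)) :
    IsIndecomposableObj C W := by
  refine ⟨fun hz => one_ne_zero (α := End W) (hz.eq_of_src _ _), fun (e : End W) he => ?_⟩
  have hid : e * e = e := he
  rcases IsLocalRing.isUnit_or_isUnit_of_add_one (add_sub_cancel e (1 : End W)) with hu | hu
  · right
    exact hu.mul_left_cancel (hid.trans (mul_one e).symm)
  · left
    have h : (1 - e) * (1 - e) = (1 - e) * 1 := by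
      rw [mul_one, sub_mul, one_mul, mul_sub, mul_one, hid, sub_self, sub_zero]
    exact sub_eq_self.1 (hu.mul_left_cancel h)

theorem comp_eq_sum_comp {X Y Z : C} {n : ℕ} {W : Fin n → C} {p : ∀ i, Z ⟶ W i}
    {s : ∀ i, W i ⟶ Z} (hsum : ∑ i, p i ≫ s i = 𝟙 Z) (g : X ⟶ Z) (h : Z ⟶ Y) :
    g ≫ h = ∑ i, (g ≫ p i) ≫ s i ≫ h := by
  conv_lhs => rw [← Category.id_comp h, ← hsum]
  simp only [Preadditive.sum_comp, Preadditive.comp_sum, Category.assoc]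

theorem mem_catRadical_of_not_id_mem (hKS : IsKrullSchmidt C) {I : CatIdeal C} {Z Y : C}
    (hZ : IsIndecomposableObj C Z) {h : Z ⟶ Y} (hh : I.mem h) (hid : ¬ I.mem (𝟙 Z)) :
    (catRadical C).mem h := by
  obtain ⟨n, V, hloc, p, s, -, -, hsum⟩ := hKS Y
  rw [← Category.comp_id h, comp_eq_sum_comp hsum]
  refine sum_mem _ _ _ fun j _ => (catRadical C).comp_mem_left _ (mem_span_of ?_)
  refine ⟨hZ, isIndecomposableObj_of_isLocalRing (hloc j), fun hiso => hid ?_⟩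
  simpa using I.comp_mem_left (inv (h ≫ p j)) (I.comp_mem_left (p j) hh)

theorem id_mem_identityIdeal {I : CatIdeal C} {S : Set C}
    (hS : ∀ X : C, I.mem (𝟙 X) → ∃ Y ∈ S, Nonempty (X ≅ Y)) {X : C} (hX : I.mem (𝟙 X)) :
    (identityIdeal C S).mem (𝟙 X) := by
  obtain ⟨Y, hY, ⟨φ⟩⟩ := hS X hX
  have hY' : (identityIdeal C S).mem (𝟙 Y) := mem_span_of ⟨rfl, hY, (eqToHom_refl Y rfl).symm⟩
  simpa using (identityIdeal C S).comp_mem_right φ.hom ((identityIdeal C S).comp_mem_left φ.inv hY')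

/-- The successor step `rad^α = rad^(pred α) · Q`. Summands whose identity lies in `I` are
isomorphic to objects of `S`, so `hQ` only needs to handle the others. -/
theorem mul_le_identityIdeal_sup_inf_mul (hKS : IsKrullSchmidt C) {I : CatIdeal C} {S : Set C}
    (hS : ∀ X : C, I.mem (𝟙 X) → ∃ Y ∈ S, Nonempty (X ≅ Y)) {T Q : CatIdeal C}
    (hT : I ≤ identityIdeal C S ⊔ (I ⊓ T))
    (hQ : ∀ {Z Y : C} (b : Z ⟶ Y), IsLocalRing (End Z) → I.mem b → ¬ I.mem (𝟙 Z) →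
      (identityIdeal C S ⊔ (I ⊓ Q)).mem b) :
    I.mul I ≤ identityIdeal C S ⊔ (I ⊓ T.mul Q) := by
  refine span_le ?_
  rintro X Y _ ⟨Z, a, b, ha, hb, rfl⟩
  obtain ⟨n, W, hloc, p, s, -, -, hsum⟩ := hKS Z
  rw [comp_eq_sum_comp hsum]
  refine sum_mem _ _ _ fun k _ => ?_
  by_cases hid : I.mem (𝟙 (W k))
  · have := (identityIdeal C S).comp_mem_right (a ≫ p k)
      ((identityIdeal C S).comp_mem_left (s k ≫ b) (id_mem_identityIdeal hS hid))
    exact mem_sup_left (by simpa using this)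
  · exact comp_mem_sup_inf_mul (hT (I.comp_mem_left _ ha))
      (hQ _ (hloc k) (I.comp_mem_right _ hb) hid)

theorem HasLocalDCC.exists_mem_iInter_of_mem (hdcc : HasLocalDCC C) {ι : Type*} [LinearOrder ι]
    [Nonempty ι] {F : ι → CatIdeal C} (hF : Antitone F) (X Y : C) :
    ∃ i₀, ∀ f : X ⟶ Y, (F i₀).mem f → (iInter F).mem f := by
  have hstab : ∃ i₀, ∀ i, i₀ ≤ i → ∀ f : X ⟶ Y, (F i₀).mem f → (F i).mem f := by
    by_contra! hcon
    choose next hle g hg using hcon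
    let seq : ℕ → ι := fun n => next^[n] (Classical.arbitrary ι)
    have hseq : ∀ n, seq (n + 1) = next (seq n) := fun n =>
      Function.iterate_succ_apply' next n _
    obtain ⟨n, hn⟩ := hdcc (fun n => F (seq n)) (fun n => hseq n ▸ hF (hle (seq n))) X Y
    have := hg (seq n)
    rw [← hseq] at this
    exact this.2 ((hn (n + 1) n.le_succ _).2 this.1)
  obtain ⟨i₀, hi₀⟩ := hstab
  refine ⟨i₀, fun f hf i => ?_⟩
  rcases le_total i i₀ with hi | hi
  exacts [hF hi hf, hi₀ i hi f hf]

theorem le_sup_inf_iInter_of_le_sup_inf (hdcc : HasLocalDCC C) {ι : Type*} [LinearOrder ι]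
    [Nonempty ι] {I L : CatIdeal C} {F : ι → CatIdeal C} (hF : Antitone F)
    (h : ∀ i, I ≤ L ⊔ (I ⊓ F i)) : I ≤ L ⊔ (I ⊓ iInter F) := by
  intro X Y f hf
  obtain ⟨i₀, hi₀⟩ := hdcc.exists_mem_iInter_of_mem (F := fun i => I ⊓ F i)
    (fun i j hij => inf_le_inf_left I (hF hij)) X Y
  obtain ⟨u, v, hu, hv, rfl⟩ := mem_sup.1 (h i₀ hf)
  exact mem_sup.2 ⟨u, v, hu, ⟨hv.1, fun i => (hi₀ v hv i).2⟩, rfl⟩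

theorem le_identityIdeal_sup_inf_tpow (hKS : IsKrullSchmidt C) (hdcc : HasLocalDCC C)
    {I : CatIdeal C} (hI : I.IsIdempotent) {S : Set C}
    (hS : ∀ X : C, I.mem (𝟙 X) → ∃ Y ∈ S, Nonempty (X ≅ Y)) (α : Ordinal.{w}) :
    I ≤ identityIdeal C S ⊔ (I ⊓ tpow (catRadical C) α) := by
  induction α using WellFoundedLT.induction with
  | _ α IH =>
  rcases eq_or_ne α 0 with rfl | h0
  · intro X Y f hf
    exact mem_sup_right ⟨hf, by rw [tpow_zero]; trivial⟩
  by_cases hl : Order.IsSuccLimit α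
  · rw [tpow_of_isSuccLimit _ hl]
    have : Nonempty {β // β < α} := ⟨⟨0, hl.bot_lt⟩⟩
    exact le_sup_inf_iInter_of_le_sup_inf (F := fun β : {β // β < α} => tpow _ β.1) hdcc
      (fun β γ h => tpow_antitone _ h) fun β => IH β.1 β.2
  rw [tpow_of_not_isSuccLimit _ h0 hl]
  refine hI.le.trans (mul_le_identityIdeal_sup_inf_mul hKS hS
    (IH _ (Ordinal.pred_lt_of_not_isSuccLimit h0 hl)) fun b hZ hb hid => ?_)
  split_ifs
  · exact IH _ (limitPart_lt h0 hl) hb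
  · exact mem_sup_right ⟨hb, mem_catRadical_of_not_id_mem hKS
      (isIndecomposableObj_of_isLocalRing hZ) hb hid⟩

end KrullSchmidt

open CategoryTheory in
theorem stmt8_general {C : Type u} [CategoryTheory.Category.{v} C] [CategoryTheory.Preadditive C] (hKS : IsKrullSchmidt C) (hdcc : HasLocalDCC C)
    (I : CatIdeal C) (hI : I.IsIdempotent) (S : Set C)
    (hS1 : ∀ X ∈ S, I.mem (𝟙 X))
    (hS2 : ∀ X : C, I.mem (𝟙 X) → ∃ Y ∈ S, Nonempty (X ≅ Y)) :
    I = CatIdeal.span (fun {A B} f =>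
      (∃ h : A = B, A ∈ S ∧ f = CategoryTheory.eqToHom h) ∨
      (I.mem f ∧ (catTransRadical C).mem f)) := by
  have hdecomp : I ≤ identityIdeal C S ⊔ (I ⊓ catTransRadical C) :=
    le_sup_inf_iInter_of_le_sup_inf hdcc (CatIdeal.tpow_antitone _)
      (le_identityIdeal_sup_inf_tpow hKS hdcc hI hS2)
  apply le_antisymm
  · intro X Y f hf
    obtain ⟨u, v, hu, hv, rfl⟩ := CatIdeal.mem_sup.1 (hdecomp hf)
    exact CatIdeal.add_mem _ (hu _ fun hg => CatIdeal.mem_span_of (Or.inl hg))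
      (CatIdeal.mem_span_of (Or.inr hv))
  · refine CatIdeal.span_le ?_
    rintro A B g (⟨rfl, hA, rfl⟩ | ⟨hg, -⟩)
    exacts [by simpa using hS1 A hA, hg]

open CategoryTheory in
/-- An idempotent ideal is generated by a representative set `S` of its
identity morphisms together with its intersection with the transfinite radical. -/
theorem stmt8 {C : Type u} [CategoryTheory.Category.{v} C] [CategoryTheory.Preadditive C] [CategoryTheory.Limits.HasFiniteBiproducts C] [CategoryTheory.EssentiallySmall.{v} C] (hKS : IsKrullSchmidt C) (hdcc : HasLocalDCC C)
    (I : CatIdeal C) (hI : I.IsIdempotent) (S : Set C)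
    (hS1 : ∀ X ∈ S, I.mem (𝟙 X))
    (hS2 : ∀ X : C, I.mem (𝟙 X) → ∃ Y ∈ S, Nonempty (X ≅ Y)) :
    I = CatIdeal.span (fun {A B} f =>
      (∃ h : A = B, A ∈ S ∧ f = CategoryTheory.eqToHom h) ∨
      (I.mem f ∧ (catTransRadical C).mem f)) :=
  stmt8_general hKS hdcc I hI S hS1 hS2
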